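/- For all indices 1 ≤ i < j ≤ n+1 and every nonterminal A of G: some pair (A, u) belongs to M(i,j) if and only if there exists a string t' ∈ Σ* with A ⇒* t' in G and d_ed(s_i^{j−1}, t') ≤ R. -/

import Mathlib

/-- A scored production of a grammar: a left-hand-side nonterminal, a right-hand-side
string of nonterminals and terminals, and a score (edit cost). -/
structure ScoredProd (N : Type*) (T : Type*) where
  lhs : N
  rhs : List (N ⊕ T)
  score : ℕ

/-- `ScoredDerives P u v c` : from the sentential form `u` one can derive the sentential
form `v` using productions from `P` whose scores sum to `c`. -/
inductive ScoredDerives {N T : Type*} (P : Set (ScoredProd N T)) :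
    List (N ⊕ T) → List (N ⊕ T) → ℕ → Prop
  | refl (w : List (N ⊕ T)) : ScoredDerives P w w 0
  | step {u l r : List (N ⊕ T)} {p : ScoredProd N T} {c : ℕ} :
      ScoredDerives P u (l ++ [Sum.inl p.lhs] ++ r) c → p ∈ P →
      ScoredDerives P u (l ++ p.rhs ++ r) (c + p.score)

/-- A context-free grammar in Chomsky normal form: binary rules `A → BC`,
terminal rules `A → a`, and possibly the rule `S → ε` (recorded by `eps`). -/
structure CNF (N : Type*) (T : Type*) where
  start : N
  bin : Set (N × N × N)
  term : Set (N × T)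
  eps : Prop

/-- The productions of the CNF grammar `G`, all of score `0`. -/
def CNF.prods {N T : Type*} (G : CNF N T) : Set (ScoredProd N T) :=
  {p | (∃ A B C, (A, B, C) ∈ G.bin ∧ p = ⟨A, [Sum.inl B, Sum.inl C], 0⟩) ∨
       (∃ A a, (A, a) ∈ G.term ∧ p = ⟨A, [Sum.inr a], 0⟩) ∨
       (G.eps ∧ p = ⟨G.start, [], 0⟩)}

/-- Lift a production of `G` to the augmented grammar `G_e`, whose nonterminals are
`N ⊕ Unit` (with `Sum.inr ()` playing the role of the fresh nonterminal `I`). -/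
def liftProd {N T : Type*} (p : ScoredProd N T) : ScoredProd (N ⊕ Unit) T :=
  ⟨Sum.inl p.lhs, p.rhs.map (Sum.map Sum.inl id), p.score⟩

/-- The productions of the augmented grammar `G_e`: the original productions of `G`
(score 0), elementary substitution rules `A → y` of score 1 (for `A` having some
terminal rule and `y` with `A → y ∉ P`), elementary insertion rules `I → x` of score 1,
rules `A → IA`, `A → AI` of score 0, `I → II` of score 0, and elementary deletion rules
`A → ε` of score 1 for every terminal rule `A → x` of `G`. -/
def CNF.augProds {N T : Type*} (G : CNF N T) : Set (ScoredProd (N ⊕ Unit) T) :=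
  (liftProd '' G.prods) ∪
  {p | ∃ A y, (∃ x, (A, x) ∈ G.term) ∧ (A, y) ∉ G.term ∧
        p = ⟨Sum.inl A, [Sum.inr y], 1⟩} ∪
  {p | ∃ x, p = ⟨Sum.inr (), [Sum.inr x], 1⟩} ∪
  {p | ∃ A : N, p = ⟨Sum.inl A, [Sum.inl (Sum.inr ()), Sum.inl (Sum.inl A)], 0⟩ ∨
                p = ⟨Sum.inl A, [Sum.inl (Sum.inl A), Sum.inl (Sum.inr ())], 0⟩} ∪
  {(⟨Sum.inr (), [Sum.inl (Sum.inr ()), Sum.inl (Sum.inr ())], 0⟩ : ScoredProd (N ⊕ Unit) T)} ∪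
  {p | ∃ A x, (A, x) ∈ G.term ∧ p = ⟨Sum.inl A, [], 1⟩}

/-- `A ⇒* s` in the grammar `G`. -/
def CNF.Derives {N T : Type*} (G : CNF N T) (A : N) (s : List T) : Prop :=
  ∃ u, ScoredDerives G.prods [Sum.inl A] (s.map Sum.inr) u

/-- The language of `G`. -/
def CNF.lang {N T : Type*} (G : CNF N T) : Set (List T) := {s | G.Derives G.start s}

/-- `A ⇒* s` in the augmented grammar `G_e` with a derivation of score exactly `u`. -/
def CNF.augDerives {N T : Type*} (G : CNF N T) (A : N ⊕ Unit) (s : List T) (u : ℕ) : Prop :=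
  ScoredDerives G.augProds [Sum.inl A] (s.map Sum.inr) u

/-- Unit-cost Levenshtein distance (replaces Mathlib's removed
`levenshtein Levenshtein.defaultCost`, by its defining recursion). -/
def levenshteinUnit {T : Type*} [DecidableEq T] : List T → List T → ℕ
  | [], ys => ys.length
  | x :: xs, [] => 1 + levenshteinUnit xs []
  | x :: xs, y :: ys =>
      min (1 + levenshteinUnit xs (y :: ys))
        (min (1 + levenshteinUnit (x :: xs) ys)
          ((if x = y then 0 else 1) + levenshteinUnit xs ys))
termination_by xs ys => xs.length + ys.length

/-- The standard (unit-cost) string edit distance. -/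
def editDist {T : Type*} [DecidableEq T] (s t : List T) : ℕ :=
  levenshteinUnit s t

/-- The language edit distance `d_G(G,s) = min_{z ∈ L(G)} d_ed(s,z)`. -/
noncomputable def dG {N T : Type*} [DecidableEq T] (G : CNF N T) (s : List T) : ℕ :=
  sInf {d | ∃ z ∈ G.lang, editDist s z = d}


/-- The substring `s_i^{j-1} = s_i s_{i+1} ... s_{j-1}` (1-based indices). -/
def subStr {T : Type*} (s : List T) (i j : ℕ) : List T := (s.drop (i - 1)).take (j - i)

/-- The candidate entries generated by the construction of the matrix `M`:
(base) `(A, σ) ∈ M(i, i+1)` whenever `A → s_i` is a production of `G_e` of score `σ`;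
(combination) if `(B,u) ∈ M(i,j)`, `(C,v) ∈ M(j,k)` and `A → BC` is a production of `G_e`,
then `(A, u+v)` is a candidate for `M(i,k)`;
(ε-absorption) if `(B,u) ∈ M(i,j)`, `A → CB` (resp. `A → BC`) is a production of `G_e`, and
`C ⇒* ε` in `G_e` with a derivation of score `v`, then `(A, u+v)` is a candidate for `M(i,j)`. -/
inductive Cand {N T : Type*} (G : CNF N T) (s : List T) :
    ℕ → ℕ → (N ⊕ Unit) → ℕ → Prop
  | base {i : ℕ} {A : N ⊕ Unit} {σ : ℕ} {a : T} :
      1 ≤ i → i ≤ s.length → s[i - 1]? = some a →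
      (⟨A, [Sum.inr a], σ⟩ : ScoredProd (N ⊕ Unit) T) ∈ G.augProds →
      Cand G s i (i + 1) A σ
  | comb {i j k : ℕ} {A B C : N ⊕ Unit} {u v sc : ℕ} :
      Cand G s i j B u → Cand G s j k C v →
      (⟨A, [Sum.inl B, Sum.inl C], sc⟩ : ScoredProd (N ⊕ Unit) T) ∈ G.augProds →
      Cand G s i k A (u + v)
  | epsL {i j : ℕ} {A B C : N ⊕ Unit} {u v sc : ℕ} :
      Cand G s i j B u →
      (⟨A, [Sum.inl C, Sum.inl B], sc⟩ : ScoredProd (N ⊕ Unit) T) ∈ G.augProds →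
      ScoredDerives G.augProds [Sum.inl C] [] v →
      Cand G s i j A (u + v)
  | epsR {i j : ℕ} {A B C : N ⊕ Unit} {u v sc : ℕ} :
      Cand G s i j B u →
      (⟨A, [Sum.inl B, Sum.inl C], sc⟩ : ScoredProd (N ⊕ Unit) T) ∈ G.augProds →
      ScoredDerives G.augProds [Sum.inl C] [] v →
      Cand G s i j A (u + v)

/-- The entry `M(i,j)` of the matrix `M`: among all candidates, for each nonterminal only
the pair of minimum score is kept, and pairs of score exceeding `R` are discarded. -/
def Mmat {N T : Type*} (G : CNF N T) (s : List T) (R i j : ℕ) : Set ((N ⊕ Unit) × ℕ) :=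
  {q | Cand G s i j q.1 q.2 ∧ q.2 ≤ R ∧ ∀ v, Cand G s i j q.1 v → q.2 ≤ v}


/-!
Both sides are compared through derivations in `G_e`, written as binary parse trees. A candidate
`(X, u)` for `M(i,j)` is exactly a derivation `X ⇒* s_i^{j-1}` of score `u` in `G_e`: a binary
rule that splits the substring into two nonempty parts is a combination step, one that leaves a
side empty is an `ε`-absorption. Every elementary rule of `G_e` performs one edit, so undoing them
in a derivation of `w` of score `c` leaves a derivation in `G` of some `t` with `d_ed(w, t) ≤ c`.
Conversely a derivation of `t` in `G` becomes a derivation of any `w` in `G_e` of score at most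
`d_ed(w, t)`, by splitting `w` along an optimal alignment at each binary rule. Keeping only the
minimal score per nonterminal does not change which nonterminals occur in an entry.
-/

namespace ScoredDerives

variable {N T : Type*} {P : Set (ScoredProd N T)}

theorem trans {u v w : List (N ⊕ T)} {c d : ℕ}
    (h₁ : ScoredDerives P u v c) (h₂ : ScoredDerives P v w d) : ScoredDerives P u w (c + d) := by
  induction h₂ with
  | refl => exact h₁
  | step _ hp ih => rw [← Nat.add_assoc]; exact ih.step hp

theorem single {p : ScoredProd N T} (hp : p ∈ P) :
    ScoredDerives P [Sum.inl p.lhs] p.rhs p.score := by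
  simpa using (refl (P := P) ([] ++ [Sum.inl p.lhs] ++ [])).step hp

theorem append_context (l r : List (N ⊕ T)) {u v : List (N ⊕ T)} {c : ℕ}
    (h : ScoredDerives P u v c) : ScoredDerives P (l ++ u ++ r) (l ++ v ++ r) c := by
  induction h with
  | refl => exact refl _
  | @step l' r' p c' _ hp ih =>
    have ih' : ScoredDerives P (l ++ u ++ r) ((l ++ l') ++ [Sum.inl p.lhs] ++ (r' ++ r)) c' := by
      simpa using ih
    simpa using ih'.step hp

theorem append {u₁ v₁ u₂ v₂ : List (N ⊕ T)} {c₁ c₂ : ℕ}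
    (h₁ : ScoredDerives P u₁ v₁ c₁) (h₂ : ScoredDerives P u₂ v₂ c₂) :
    ScoredDerives P (u₁ ++ u₂) (v₁ ++ v₂) (c₁ + c₂) := by
  have h₁' := h₁.append_context [] u₂
  have h₂' := h₂.append_context v₁ []
  simp only [List.nil_append, List.append_nil] at h₁' h₂'
  exact h₁'.trans h₂'

end ScoredDerives

/-- Scored parse trees of grammars whose right-hand sides have the shapes `ε`, `a`, `BC`. -/
inductive Yields {N T : Type*} (P : Set (ScoredProd N T)) : N → List T → ℕ → Prop
  | nil {A : N} {σ : ℕ} : ⟨A, [], σ⟩ ∈ P → Yields P A [] σ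
  | term {A : N} {a : T} {σ : ℕ} : ⟨A, [Sum.inr a], σ⟩ ∈ P → Yields P A [a] σ
  | bin {A B C : N} {σ : ℕ} {w₁ w₂ : List T} {c₁ c₂ : ℕ} :
      ⟨A, [Sum.inl B, Sum.inl C], σ⟩ ∈ P → Yields P B w₁ c₁ → Yields P C w₂ c₂ →
      Yields P A (w₁ ++ w₂) (σ + c₁ + c₂)

def IsBinaryForm {N T : Type*} (P : Set (ScoredProd N T)) : Prop :=
  ∀ p ∈ P, p.rhs = [] ∨ (∃ a, p.rhs = [Sum.inr a]) ∨ ∃ B C, p.rhs = [Sum.inl B, Sum.inl C]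

inductive YieldsForm {N T : Type*} (P : Set (ScoredProd N T)) :
    List (N ⊕ T) → List T → ℕ → Prop
  | nil : YieldsForm P [] [] 0
  | terminal {a : T} {u : List (N ⊕ T)} {w : List T} {c : ℕ} :
      YieldsForm P u w c → YieldsForm P (Sum.inr a :: u) (a :: w) c
  | nonterminal {A : N} {u : List (N ⊕ T)} {w₁ w₂ : List T} {c₁ c₂ : ℕ} :
      Yields P A w₁ c₁ → YieldsForm P u w₂ c₂ →
      YieldsForm P (Sum.inl A :: u) (w₁ ++ w₂) (c₁ + c₂)

namespace YieldsForm

variable {N T : Type*} {P : Set (ScoredProd N T)}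

theorem terminals (w : List T) : YieldsForm P (w.map Sum.inr) w 0 := by
  induction w with
  | nil => exact nil
  | cons a w ih => exact ih.terminal

theorem append {u₁ u₂ : List (N ⊕ T)} {w₁ w₂ : List T} {c₁ c₂ : ℕ}
    (h₁ : YieldsForm P u₁ w₁ c₁) (h₂ : YieldsForm P u₂ w₂ c₂) :
    YieldsForm P (u₁ ++ u₂) (w₁ ++ w₂) (c₁ + c₂) := by
  induction h₁ with
  | nil => simpa using h₂
  | terminal _ ih => exact ih.terminal
  | nonterminal hA _ ih => simpa [Nat.add_assoc] using nonterminal hA ih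

theorem of_append {u₁ u₂ : List (N ⊕ T)} {w : List T} {c : ℕ}
    (h : YieldsForm P (u₁ ++ u₂) w c) :
    ∃ w₁ w₂ c₁ c₂, w = w₁ ++ w₂ ∧ c = c₁ + c₂ ∧
      YieldsForm P u₁ w₁ c₁ ∧ YieldsForm P u₂ w₂ c₂ := by
  induction u₁ generalizing w c with
  | nil => exact ⟨[], w, 0, c, rfl, by simp, nil, h⟩
  | cons X u₁ ih =>
    cases h with
    | terminal h =>
      obtain ⟨w₁, w₂, c₁, c₂, rfl, rfl, h₁, h₂⟩ := ih h
      exact ⟨_ :: w₁, w₂, c₁, c₂, rfl, rfl, h₁.terminal, h₂⟩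
    | nonterminal hA h =>
      obtain ⟨w₁, w₂, c₁, c₂, rfl, rfl, h₁, h₂⟩ := ih h
      exact ⟨_ ++ w₁, w₂, _ + c₁, c₂, by simp, by omega, nonterminal hA h₁, h₂⟩

theorem singleton_iff {A : N} {w : List T} {c : ℕ} :
    YieldsForm P [Sum.inl A] w c ↔ Yields P A w c := by
  constructor
  · rintro (_ | _ | ⟨hA, ⟨⟩⟩)
    simpa using hA
  · intro h
    simpa using nonterminal h nil

theorem yields_lhs_of_rhs (hP : IsBinaryForm P) {p : ScoredProd N T} (hp : p ∈ P)
    {w : List T} {c : ℕ} (h : YieldsForm P p.rhs w c) : Yields P p.lhs w (p.score + c) := by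
  obtain ⟨A, rhs, σ⟩ := p
  rcases hP _ hp with rfl | ⟨a, rfl⟩ | ⟨B, C, rfl⟩
  · rcases h with ⟨⟩
    exact Yields.nil hp
  · rcases h with _ | ⟨⟨⟩⟩
    exact Yields.term hp
  · rcases h with _ | _ | ⟨hB, _ | _ | ⟨hC, ⟨⟩⟩⟩
    simpa [Nat.add_assoc] using Yields.bin hp hB hC

end YieldsForm

section ParseTrees

variable {N T : Type*} {P : Set (ScoredProd N T)}

/-- Read backwards, each derivation step grafts the trees of its right-hand side onto a node
for its left-hand side. -/
theorem ScoredDerives.yieldsForm (hP : IsBinaryForm P) {u v : List (N ⊕ T)} {c : ℕ}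
    (h : ScoredDerives P u v c) {w : List T} {d : ℕ} (hv : YieldsForm P v w d) :
    YieldsForm P u w (c + d) := by
  induction h generalizing w d with
  | refl => simpa using hv
  | @step l r p c _ hp ih =>
    obtain ⟨wl', wr, cl', cr, rfl, rfl, hl', hr⟩ := hv.of_append
    obtain ⟨wl, wp, cl, cp, rfl, rfl, hl, hp'⟩ := hl'.of_append
    have hA := YieldsForm.singleton_iff.mpr (YieldsForm.yields_lhs_of_rhs hP hp hp')
    simpa [Nat.add_assoc, Nat.add_left_comm] using ih ((hl.append hA).append hr)

theorem ScoredDerives.yields (hP : IsBinaryForm P) {A : N} {w : List T} {c : ℕ}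
    (h : ScoredDerives P [Sum.inl A] (w.map Sum.inr) c) : Yields P A w c :=
  YieldsForm.singleton_iff.mp (h.yieldsForm hP (.terminals w))

theorem Yields.scoredDerives {A : N} {w : List T} {c : ℕ} (h : Yields P A w c) :
    ScoredDerives P [Sum.inl A] (w.map Sum.inr) c := by
  induction h with
  | nil hp => exact ScoredDerives.single hp
  | term hp => exact ScoredDerives.single hp
  | bin hp _ _ ih₁ ih₂ =>
    rw [List.map_append, Nat.add_assoc]
    exact (ScoredDerives.single hp).trans (ih₁.append ih₂ : ScoredDerives P ([_] ++ [_]) _ _)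

end ParseTrees

section EditDistance

variable {T : Type*} [DecidableEq T]

@[simp]
theorem editDist_nil_left (t : List T) : editDist [] t = t.length := by
  simp [editDist, levenshteinUnit]

@[simp]
theorem editDist_nil_right (w : List T) : editDist w [] = w.length := by
  induction w with
  | nil => simp [editDist, levenshteinUnit]
  | cons x w ih => simp only [editDist, levenshteinUnit] at ih ⊢; simp [ih, Nat.add_comm]

theorem editDist_cons_cons (x y : T) (w t : List T) :
    editDist (x :: w) (y :: t) =
      min (1 + editDist w (y :: t))
        (min (1 + editDist (x :: w) t) ((if x = y then 0 else 1) + editDist w t)) := by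
  rw [editDist, levenshteinUnit.eq_3]; rfl

theorem editDist_cons_left_le (x : T) (w t : List T) :
    editDist (x :: w) t ≤ 1 + editDist w t := by
  cases t with
  | nil => simp [Nat.add_comm]
  | cons y t => rw [editDist_cons_cons]; exact min_le_left _ _

theorem editDist_cons_right_le (w : List T) (y : T) (t : List T) :
    editDist w (y :: t) ≤ 1 + editDist w t := by
  cases w with
  | nil => simp [Nat.add_comm]
  | cons x w => rw [editDist_cons_cons]; exact (min_le_right _ _).trans (min_le_left _ _)

theorem editDist_cons_cons_le (x y : T) (w t : List T) :
    editDist (x :: w) (y :: t) ≤ (if x = y then 0 else 1) + editDist w t := by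
  rw [editDist_cons_cons]; exact (min_le_right _ _).trans (min_le_right _ _)

@[simp]
theorem editDist_self (w : List T) : editDist w w = 0 := by
  induction w with
  | nil => simp
  | cons x w ih => simpa [ih] using editDist_cons_cons_le x x w w

theorem editDist_append_left_le (u w t : List T) :
    editDist (u ++ w) t ≤ u.length + editDist w t := by
  induction u with
  | nil => simp
  | cons x u ih =>
    have := editDist_cons_left_le x (u ++ w) t
    simp only [List.cons_append, List.length_cons]
    omega

theorem editDist_append_right_le (w t v : List T) :
    editDist w (t ++ v) ≤ t.length + editDist w v := by
  induction t with
  | nil => simp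
  | cons y t ih =>
    have := editDist_cons_right_le w y (t ++ v)
    simp only [List.cons_append, List.length_cons]
    omega

theorem editDist_append_le (w₁ w₂ t₁ t₂ : List T) :
    editDist (w₁ ++ w₂) (t₁ ++ t₂) ≤ editDist w₁ t₁ + editDist w₂ t₂ := by
  induction t₁ generalizing w₁ with
  | nil => simpa using editDist_append_left_le w₁ w₂ t₂
  | cons y t₁ iht =>
    induction w₁ with
    | nil => simpa using editDist_append_right_le w₂ (y :: t₁) t₂
    | cons x w₁ ihw =>
      have := iht (x :: w₁)
      have := iht w₁
      simp only [List.cons_append] at *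
      rw [editDist_cons_cons, editDist_cons_cons]
      omega

theorem exists_editDist_take_add_editDist_drop_le (t₁ : List T) :
    ∀ w t₂ : List T,
      ∃ k, editDist (w.take k) t₁ + editDist (w.drop k) t₂ ≤ editDist w (t₁ ++ t₂) := by
  induction t₁ with
  | nil => exact fun w t₂ => ⟨0, by simp⟩
  | cons y t₁ iht =>
    intro w t₂
    induction w with
    | nil => exact ⟨0, by simp; omega⟩
    | cons x w ihw =>
      obtain ⟨k, hk⟩ := ihw
      rw [List.cons_append] at hk
      obtain ⟨k₁, hk₁⟩ := iht (x :: w) t₂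
      obtain ⟨k₂, hk₂⟩ := iht w t₂
      have hdel := editDist_cons_left_le x (w.take k) (y :: t₁)
      have hins := editDist_cons_right_le ((x :: w).take k₁) y t₁
      have hsub := editDist_cons_cons_le x y (w.take k₂) t₁
      rw [List.cons_append, editDist_cons_cons]
      rcases min_choice (1 + editDist w (y :: (t₁ ++ t₂)))
          (min (1 + editDist (x :: w) (t₁ ++ t₂))
            ((if x = y then 0 else 1) + editDist w (t₁ ++ t₂))) with h | h <;> rw [h]
      · exact ⟨k + 1, by simp only [List.take_succ_cons, List.drop_succ_cons]; omega⟩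
      · rcases min_choice (1 + editDist (x :: w) (t₁ ++ t₂))
            ((if x = y then 0 else 1) + editDist w (t₁ ++ t₂)) with h' | h' <;> rw [h']
        · exact ⟨k₁, by omega⟩
        · exact ⟨k₂ + 1, by simp only [List.take_succ_cons, List.drop_succ_cons]; omega⟩

theorem length_le_length_add_editDist (w t : List T) : w.length ≤ t.length + editDist w t := by
  induction t generalizing w with
  | nil => simp
  | cons y t iht =>
    induction w with
    | nil => simp
    | cons x w ihw =>
      have := iht (x :: w)
      have := iht w
      rw [editDist_cons_cons]
      simp only [List.length_cons] at *
      omega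

theorem length_le_editDist_singleton {a : T} {w : List T} (h : a ∉ w) :
    w.length ≤ editDist w [a] := by
  induction w with
  | nil => simp
  | cons x w ih =>
    obtain ⟨hxa, haw⟩ := not_or.mp (List.mem_cons.not.mp h)
    rw [editDist_cons_cons, if_neg (Ne.symm hxa)]
    have := ih haw
    simp only [editDist_nil_right, List.length_cons] at *
    omega

end EditDistance

namespace CNF

variable {N T : Type*} (G : CNF N T)

section Rules

variable {G} {A B C : N} {X Y Z : N ⊕ Unit} {a : T} {σ : ℕ}

theorem mk_nil_mem_prods_iff : (⟨A, [], σ⟩ : ScoredProd N T) ∈ G.prods ↔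
    G.eps ∧ A = G.start ∧ σ = 0 := by
  simp [prods]

theorem mk_term_mem_prods_iff : (⟨A, [Sum.inr a], σ⟩ : ScoredProd N T) ∈ G.prods ↔
    (A, a) ∈ G.term ∧ σ = 0 := by
  simp [prods, and_comm]

theorem mk_bin_mem_prods_iff : (⟨A, [Sum.inl B, Sum.inl C], σ⟩ : ScoredProd N T) ∈ G.prods ↔
    (A, B, C) ∈ G.bin ∧ σ = 0 := by
  simp [prods, and_comm]

theorem mk_nil_mem_augProds_iff : (⟨X, [], σ⟩ : ScoredProd (N ⊕ Unit) T) ∈ G.augProds ↔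
    (G.eps ∧ X = Sum.inl G.start ∧ σ = 0) ∨
      ∃ A, (∃ x, (A, x) ∈ G.term) ∧ X = Sum.inl A ∧ σ = 1 := by
  simp [augProds, prods, liftProd, or_and_right, exists_or, eq_comm (b := X), eq_comm (b := σ)]

theorem mk_term_mem_augProds_iff :
    (⟨X, [Sum.inr a], σ⟩ : ScoredProd (N ⊕ Unit) T) ∈ G.augProds ↔
      (∃ A, (A, a) ∈ G.term ∧ X = Sum.inl A ∧ σ = 0) ∨
      (∃ A, (∃ x, (A, x) ∈ G.term) ∧ (A, a) ∉ G.term ∧ X = Sum.inl A ∧ σ = 1) ∨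
      (X = Sum.inr () ∧ σ = 1) := by
  simp [augProds, prods, liftProd, or_and_right, exists_or, or_assoc, eq_comm (b := X),
    eq_comm (b := σ)]

theorem mk_bin_mem_augProds_iff :
    (⟨X, [Sum.inl Y, Sum.inl Z], σ⟩ : ScoredProd (N ⊕ Unit) T) ∈ G.augProds ↔
      ((∃ A B C, (A, B, C) ∈ G.bin ∧ X = Sum.inl A ∧ Y = Sum.inl B ∧ Z = Sum.inl C) ∨
      (∃ A, X = Sum.inl A ∧ Y = Sum.inr () ∧ Z = Sum.inl A) ∨
      (∃ A, X = Sum.inl A ∧ Y = Sum.inl A ∧ Z = Sum.inr ()) ∨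
      (X = Sum.inr () ∧ Y = Sum.inr () ∧ Z = Sum.inr ())) ∧ σ = 0 := by
  simp [augProds, prods, liftProd, or_and_right, exists_or, eq_comm (b := X), eq_comm (b := σ),
    eq_comm (b := Y), eq_comm (b := Z)]
  grind

end Rules

theorem isBinaryForm_prods : IsBinaryForm G.prods := by
  rintro p (⟨A, B, C, -, rfl⟩ | ⟨A, a, -, rfl⟩ | ⟨-, rfl⟩) <;> simp

theorem isBinaryForm_augProds : IsBinaryForm G.augProds := by
  rintro p
    (((((⟨q, hq, rfl⟩ | ⟨A, y, -, -, rfl⟩) | ⟨x, rfl⟩) | ⟨A, rfl | rfl⟩) | rfl) | ⟨A, x, -, rfl⟩)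
  · rcases G.isBinaryForm_prods q hq with h | ⟨a, h⟩ | ⟨B, C, h⟩ <;> simp [liftProd, h]
  all_goals simp

variable {G}

theorem derives_iff_exists_yields {A : N} {t : List T} :
    G.Derives A t ↔ ∃ c, Yields G.prods A t c :=
  ⟨fun ⟨_, h⟩ => ⟨_, h.yields G.isBinaryForm_prods⟩, fun ⟨_, h⟩ => ⟨_, h.scoredDerives⟩⟩

theorem derives_append {A B C : N} {t₁ t₂ : List T} (h : (A, B, C) ∈ G.bin)
    (h₁ : G.Derives B t₁) (h₂ : G.Derives C t₂) : G.Derives A (t₁ ++ t₂) := by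
  obtain ⟨_, h₁⟩ := derives_iff_exists_yields.mp h₁
  obtain ⟨_, h₂⟩ := derives_iff_exists_yields.mp h₂
  exact derives_iff_exists_yields.mpr ⟨_, .bin (mk_bin_mem_prods_iff.mpr ⟨h, rfl⟩) h₁ h₂⟩

theorem derives_singleton {A : N} {a : T} (h : (A, a) ∈ G.term) : G.Derives A [a] :=
  derives_iff_exists_yields.mpr ⟨0, .term (mk_term_mem_prods_iff.mpr ⟨h, rfl⟩)⟩

theorem derives_start_nil (h : G.eps) : G.Derives G.start [] :=
  derives_iff_exists_yields.mpr ⟨0, .nil (mk_nil_mem_prods_iff.mpr ⟨h, rfl, rfl⟩)⟩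

variable (G)

/-- The strings of `G` that a nonterminal of `G_e` stands for once the edit operations are
undone: `I` only generates inserted symbols, so it stands for the empty string. -/
def baseLang : N ⊕ Unit → Set (List T)
  | Sum.inl A => {t | G.Derives A t}
  | Sum.inr () => {[]}

variable {G}

theorem append_mem_baseLang {X Y Z : N ⊕ Unit} {σ : ℕ} {t₁ t₂ : List T}
    (hp : (⟨X, [Sum.inl Y, Sum.inl Z], σ⟩ : ScoredProd (N ⊕ Unit) T) ∈ G.augProds)
    (h₁ : t₁ ∈ G.baseLang Y) (h₂ : t₂ ∈ G.baseLang Z) : t₁ ++ t₂ ∈ G.baseLang X := by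
  obtain ⟨⟨A, B, C, h, rfl, rfl, rfl⟩ | ⟨A, rfl, rfl, rfl⟩ | ⟨A, rfl, rfl, rfl⟩ | ⟨rfl, rfl, rfl⟩,
    -⟩ := mk_bin_mem_augProds_iff.mp hp
  · exact derives_append h h₁ h₂
  · simpa [baseLang, show t₁ = [] from h₁] using h₂
  · simpa [baseLang, show t₂ = [] from h₂] using h₁
  · simp_all [baseLang]

end CNF

section Soundness

open CNF

variable {N T : Type*} {G : CNF N T} [DecidableEq T]

theorem Yields.exists_mem_baseLang_editDist_le {X : N ⊕ Unit} {w : List T} {c : ℕ}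
    (h : Yields G.augProds X w c) : ∃ t ∈ G.baseLang X, editDist w t ≤ c := by
  induction h with
  | nil hp =>
    rcases mk_nil_mem_augProds_iff.mp hp with ⟨he, rfl, rfl⟩ | ⟨A, ⟨x, hx⟩, rfl, rfl⟩
    · exact ⟨[], derives_start_nil he, by simp⟩
    · exact ⟨[x], derives_singleton hx, by simp⟩
  | @term X a σ hp =>
    rcases mk_term_mem_augProds_iff.mp hp with ⟨A, ha, rfl, rfl⟩ | ⟨A, ⟨x, hx⟩, -, rfl, rfl⟩ |
      ⟨rfl, rfl⟩
    · exact ⟨[a], derives_singleton ha, by simp⟩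
    · refine ⟨[x], derives_singleton hx, ?_⟩
      simpa using (editDist_cons_cons_le a x [] []).trans (by split_ifs <;> simp)
    · exact ⟨[], rfl, by simp⟩
  | @bin X Y Z σ w₁ w₂ c₁ c₂ hp _ _ ih₁ ih₂ =>
    obtain ⟨t₁, ht₁, hle₁⟩ := ih₁
    obtain ⟨t₂, ht₂, hle₂⟩ := ih₂
    refine ⟨t₁ ++ t₂, append_mem_baseLang hp ht₁ ht₂, ?_⟩
    have := editDist_append_le w₁ w₂ t₁ t₂
    omega

end Soundness

section Completeness

open CNF

variable {N T : Type*} {G : CNF N T}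

theorem Yields.insert_left {A : N} {w : List T} {c : ℕ}
    (h : Yields G.augProds (Sum.inl A) w c) (x : List T) :
    Yields G.augProds (Sum.inl A) (x ++ w) (x.length + c) := by
  induction x with
  | nil => simpa using h
  | cons b x ih =>
    have hI : Yields G.augProds (Sum.inr ()) [b] 1 := .term (by simp [mk_term_mem_augProds_iff])
    have hIA := Yields.bin (A := Sum.inl A) (σ := 0) (by simp [mk_bin_mem_augProds_iff]) hI ih
    simpa [Nat.add_assoc, Nat.add_comm 1] using hIA

theorem Yields.insert_right {A : N} {w : List T} {c : ℕ}
    (h : Yields G.augProds (Sum.inl A) w c) (y : List T) :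
    Yields G.augProds (Sum.inl A) (w ++ y) (c + y.length) := by
  induction y generalizing w c with
  | nil => simpa using h
  | cons b y ih =>
    have hI : Yields G.augProds (Sum.inr ()) [b] 1 := .term (by simp [mk_term_mem_augProds_iff])
    have hAI := Yields.bin (A := Sum.inl A) (σ := 0) (by simp [mk_bin_mem_augProds_iff]) h hI
    simpa [Nat.add_assoc, Nat.add_comm 1] using ih hAI

variable [DecidableEq T]

/-- A terminal rule `A → a` is matched against `w` by deleting `a` when `w = ε`, by keeping
an occurrence of `a` in `w` and inserting the rest, or else by substituting the first symbol
of `w` for `a` and inserting the rest. -/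
theorem CNF.exists_yields_augProds_le_editDist_singleton {A : N} {a : T} (ha : (A, a) ∈ G.term)
    (w : List T) : ∃ c ≤ editDist w [a], Yields G.augProds (Sum.inl A) w c := by
  by_cases haw : a ∈ w
  · obtain ⟨x, y, rfl⟩ := List.append_of_mem haw
    have hA : Yields G.augProds (Sum.inl A) [a] 0 :=
      .term (by simp [mk_term_mem_augProds_iff, ha])
    have hlen := length_le_length_add_editDist (x ++ a :: y) [a]
    refine ⟨x.length + 0 + y.length, ?_, by simpa using (hA.insert_left x).insert_right y⟩
    simp only [List.length_append, List.length_cons, List.length_nil] at hlen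
    omega
  · rcases w with _ | ⟨b, y⟩
    · exact ⟨1, by simp, .nil (mk_nil_mem_augProds_iff.mpr (.inr ⟨A, ⟨a, ha⟩, rfl, rfl⟩))⟩
    · obtain ⟨σ, hσ, hb⟩ : ∃ σ ≤ 1, Yields G.augProds (Sum.inl A) [b] σ := by
        by_cases hb : (A, b) ∈ G.term
        · exact ⟨0, zero_le_one, .term (by simp [mk_term_mem_augProds_iff, hb])⟩
        · exact ⟨1, le_rfl,
            .term (mk_term_mem_augProds_iff.mpr (.inr (.inl ⟨A, ⟨a, ha⟩, hb, rfl, rfl⟩)))⟩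
      have hlen := length_le_editDist_singleton haw
      refine ⟨σ + y.length, ?_, hb.insert_right y⟩
      simp only [List.length_cons] at hlen
      omega

theorem Yields.exists_augProds_le_editDist {A : N} {t : List T} {c : ℕ}
    (h : Yields G.prods A t c) (w : List T) :
    ∃ c' ≤ editDist w t, Yields G.augProds (Sum.inl A) w c' := by
  induction h generalizing w with
  | nil hp =>
    obtain ⟨he, rfl, -⟩ := mk_nil_mem_prods_iff.mp hp
    have hS : Yields G.augProds (Sum.inl G.start) [] 0 :=
      .nil (by simp [mk_nil_mem_augProds_iff, he])
    exact ⟨w.length, by simp, by simpa using hS.insert_left w⟩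
  | term hp =>
    exact exists_yields_augProds_le_editDist_singleton (mk_term_mem_prods_iff.mp hp).1 w
  | @bin A B C σ t₁ t₂ c₁ c₂ hp _ _ ih₁ ih₂ =>
    obtain ⟨k, hk⟩ := exists_editDist_take_add_editDist_drop_le t₁ w t₂
    obtain ⟨c₁', hc₁, h₁⟩ := ih₁ (w.take k)
    obtain ⟨c₂', hc₂, h₂⟩ := ih₂ (w.drop k)
    have hbin := (mk_bin_mem_prods_iff.mp hp).1
    refine ⟨0 + c₁' + c₂', by omega, ?_⟩
    simpa using
      Yields.bin (A := Sum.inl A) (σ := 0) (by simp [mk_bin_mem_augProds_iff, hbin]) h₁ h₂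

end Completeness

section SubString

variable {T : Type*} {s : List T} {i j k : ℕ}

theorem subStr_append (hi : 1 ≤ i) (hij : i ≤ j) (hjk : j ≤ k) :
    subStr s i k = subStr s i j ++ subStr s j k := by
  have e₁ : j - 1 = (i - 1) + (j - i) := by omega
  have e₂ : k - i = (j - i) + (k - j) := by omega
  rw [subStr, subStr, subStr, e₂, List.take_add, e₁, ← List.drop_drop]

theorem length_subStr (hi : 1 ≤ i) (hj : j ≤ s.length + 1) :
    (subStr s i j).length = j - i := by
  simp only [subStr, List.length_take, List.length_drop]
  omega

theorem subStr_succ {a : T} (h : s[i - 1]? = some a) : subStr s i (i + 1) = [a] := by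
  obtain ⟨hlt, rfl⟩ := List.getElem?_eq_some_iff.mp h
  rw [subStr, Nat.add_sub_cancel_left, List.drop_eq_getElem_cons hlt]
  rfl

theorem subStr_eq_singleton {a : T} (hi : 1 ≤ i) (hj : j ≤ s.length + 1)
    (h : subStr s i j = [a]) : j = i + 1 ∧ s[i - 1]? = some a := by
  have hlen := length_subStr (s := s) hi hj
  have ha : (subStr s i j)[0]? = some a := by simp [h]
  rw [h] at hlen
  simp only [subStr, List.getElem?_take, List.getElem?_drop] at ha
  refine ⟨by simp at hlen; omega, ?_⟩
  simpa [show 0 < j - i by simp at hlen; omega] using ha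

theorem subStr_eq_append {w₁ w₂ : List T} (hi : 1 ≤ i) (h : subStr s i j = w₁ ++ w₂) :
    subStr s i (i + w₁.length) = w₁ ∧ subStr s (i + w₁.length) j = w₂ := by
  have hk : w₁.length ≤ j - i := by
    have := congrArg List.length h
    simp only [subStr, List.length_take, List.length_append] at this
    omega
  constructor
  · have := congrArg (List.take w₁.length) h
    simp only [List.take_left, subStr, List.take_take, min_eq_left hk] at this
    simpa [subStr] using this
  · have := congrArg (List.drop w₁.length) h
    simp only [List.drop_left, subStr, List.drop_take, List.drop_drop] at this
    rw [← this, subStr, show j - (i + w₁.length) = j - i - w₁.length by omega,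
      show i + w₁.length - 1 = i - 1 + w₁.length by omega]

end SubString

namespace Cand

open CNF

variable {N T : Type*} {G : CNF N T} {s : List T} {i j : ℕ} {X : N ⊕ Unit} {u : ℕ}

theorem bounds (h : Cand G s i j X u) : 1 ≤ i ∧ i < j := by
  induction h <;> omega

theorem yields (h : Cand G s i j X u) : Yields G.augProds X (subStr s i j) u := by
  induction h with
  | base _ _ hs hp => rw [subStr_succ hs]; exact .term hp
  | comb h₁ h₂ hp ih₁ ih₂ =>
    obtain rfl := (mk_bin_mem_augProds_iff.mp hp).2
    obtain ⟨hi, hij⟩ := h₁.bounds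
    rw [subStr_append hi hij.le h₂.bounds.2.le]
    simpa using Yields.bin hp ih₁ ih₂
  | epsL _ hp hε ih =>
    obtain rfl := (mk_bin_mem_augProds_iff.mp hp).2
    simpa [Nat.add_comm] using Yields.bin hp (hε.yields G.isBinaryForm_augProds (w := [])) ih
  | epsR _ hp hε ih =>
    obtain rfl := (mk_bin_mem_augProds_iff.mp hp).2
    simpa using Yields.bin hp ih (hε.yields G.isBinaryForm_augProds (w := []))

theorem of_yields {c : ℕ} (h : Yields G.augProds X (subStr s i j) c) (hi : 1 ≤ i)
    (hij : i < j) (hj : j ≤ s.length + 1) : Cand G s i j X c := by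
  generalize hw : subStr s i j = w at h
  induction h generalizing i j with
  | nil _ =>
    have := length_subStr (s := s) hi hj
    simp [hw] at this
    omega
  | term hp =>
    obtain ⟨rfl, hs⟩ := subStr_eq_singleton hi hj hw
    exact .base hi (by omega) hs hp
  | @bin X Y Z σ w₁ w₂ c₁ c₂ hp h₁ h₂ ih₁ ih₂ =>
    obtain rfl := (mk_bin_mem_augProds_iff.mp hp).2
    obtain ⟨hw₁, hw₂⟩ := subStr_eq_append hi hw
    obtain rfl | hne₁ := eq_or_ne w₁ []
    · simpa [Nat.add_comm] using
        Cand.epsL (ih₂ hi hij hj (by simpa using hw)) hp h₁.scoredDerives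
    obtain rfl | hne₂ := eq_or_ne w₂ []
    · simpa using Cand.epsR (ih₁ hi hij hj (by simpa using hw)) hp h₂.scoredDerives
    have hlen : i + w₁.length < j := by
      have := length_subStr (s := s) hi hj
      rw [hw, List.length_append] at this
      have := List.length_pos_iff.mpr hne₂
      omega
    simpa using Cand.comb (ih₁ hi (by simpa [List.length_pos_iff] using hne₁) (by omega) hw₁)
      (ih₂ (by omega) hlen hj hw₂) hp

end Cand

theorem exists_mem_Mmat_iff {N T : Type*} {G : CNF N T} {s : List T} {R i j : ℕ}
    {X : N ⊕ Unit} :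
    (∃ u, (X, u) ∈ Mmat G s R i j) ↔ ∃ u, Cand G s i j X u ∧ u ≤ R := by
  classical
  constructor
  · rintro ⟨u, hu, huR, -⟩
    exact ⟨u, hu, huR⟩
  · rintro ⟨u, hu, huR⟩
    have hex : ∃ v, Cand G s i j X v := ⟨u, hu⟩
    exact ⟨Nat.find hex, Nat.find_spec hex, (Nat.find_min' hex hu).trans huR,
      fun v hv => Nat.find_min' hex hv⟩

theorem Mmat_mem_iff_editDist_le_general {N T : Type*} [DecidableEq T]
    (G : CNF N T) (s : List T) (R : ℕ)
    (i j : ℕ) (hi : 1 ≤ i) (hij : i < j) (hj : j ≤ s.length + 1) (A : N) :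
    (∃ u, (Sum.inl A, u) ∈ Mmat G s R i j) ↔
      ∃ t', G.Derives A t' ∧ editDist (subStr s i j) t' ≤ R := by
  rw [exists_mem_Mmat_iff]
  constructor
  · rintro ⟨u, hu, huR⟩
    obtain ⟨t, ht, hle⟩ := hu.yields.exists_mem_baseLang_editDist_le
    exact ⟨t, ht, hle.trans huR⟩
  · rintro ⟨t, ht, hle⟩
    obtain ⟨c, hc⟩ := CNF.derives_iff_exists_yields.mp ht
    obtain ⟨c', hc', hy⟩ := hc.exists_augProds_le_editDist (subStr s i j)
    exact ⟨c', .of_yields hy hi hij hj, hc'.trans hle⟩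

/-- For all `1 ≤ i < j ≤ n+1` and every nonterminal `A` of `G`: some pair
`(A, u)` belongs to `M(i,j)` iff there exists a string `t' ∈ Σ*` with `A ⇒* t'` in `G`
and `d_ed(s_i^{j-1}, t') ≤ R`. -/
theorem Mmat_mem_iff_editDist_le {N T : Type*} [DecidableEq T]
    (G : CNF N T) (hne : G.lang.Nonempty) (s : List T) (R : ℕ) (hR : 1 ≤ R)
    (i j : ℕ) (hi : 1 ≤ i) (hij : i < j) (hj : j ≤ s.length + 1) (A : N) :
    (∃ u, (Sum.inl A, u) ∈ Mmat G s R i j) ↔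
      ∃ t', G.Derives A t' ∧ editDist (subStr s i j) t' ≤ R :=
  Mmat_mem_iff_editDist_le_general G s R i j hi hij hj A
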